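/- Let u = (u_n) be a TB-sequence in an Abelian group G. Then for a group homomorphism χ : G → 𝕋 the following are equivalent: χ is continuous on (G, u); χ is continuous on (G, bu); χ ∈ s_u(G_d^), i.e., χ(u_n) → 1 in 𝕋. In particular, the dual groups of (G, u) and of (G, bu) coincide algebraically with s_u(G_d^). -/

import Mathlib

open Filter Topology

noncomputable section

/-- The circle group `𝕋 = ℝ/ℤ`. -/
abbrev 𝕋 : Type := AddCircle (1 : ℝ)

/-- The sequence `u` converges to `0` in the topology `τ`. -/
def TendsToZero {G : Type*} [AddCommGroup G] (τ : TopologicalSpace G) (u : ℕ → G) : Prop :=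
  Filter.Tendsto u Filter.atTop (@nhds G τ 0)

/-- `τ` is a Hausdorff group topology on `G` in which every sequence of `S` converges to `0`. -/
def IsTopFor {G : Type*} [AddCommGroup G] (S : Set (ℕ → G)) (τ : TopologicalSpace G) : Prop :=
  @IsTopologicalAddGroup G τ _ ∧ @T2Space G τ ∧ ∀ u ∈ S, TendsToZero τ u

/-- `S` is a `TS`-set of sequences in `G`. -/
def IsTSSet {G : Type*} [AddCommGroup G] (S : Set (ℕ → G)) : Prop :=
  ∃ τ : TopologicalSpace G, IsTopFor S τ

/-- `τ` is the finest Hausdorff group topology on `G` in which every sequence of `S`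
converges to `0` (recall that in Mathlib's order on topologies, `≤` means "finer"). -/
def IsFinestFor {G : Type*} [AddCommGroup G] (S : Set (ℕ → G)) (τ : TopologicalSpace G) : Prop :=
  IsTopFor S τ ∧ ∀ τ' : TopologicalSpace G, IsTopFor S τ' → τ ≤ τ'

/-- The group topology `τ` on `G` is totally bounded (precompact): every neighborhood `U` of `0`
has finitely many translates covering `G`. -/
def IsPrecompactTop {G : Type*} [AddCommGroup G] (τ : TopologicalSpace G) : Prop :=
  ∀ U ∈ @nhds G τ 0, ∃ F : Finset G, ∀ g : G, ∃ f ∈ F, g - f ∈ U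

/-- `τ` is a totally bounded Hausdorff group topology on `G` in which every sequence of `S`
converges to `0`. -/
def IsPTopFor {G : Type*} [AddCommGroup G] (S : Set (ℕ → G)) (τ : TopologicalSpace G) : Prop :=
  IsTopFor S τ ∧ IsPrecompactTop τ

/-- `S` is a `TBS`-set of sequences in `G`. -/
def IsTBSSet {G : Type*} [AddCommGroup G] (S : Set (ℕ → G)) : Prop :=
  ∃ τ : TopologicalSpace G, IsPTopFor S τ

/-- `τ` is the finest totally bounded Hausdorff group topology on `G` in which every sequence
of `S` converges to `0`. -/
def IsFinestPFor {G : Type*} [AddCommGroup G] (S : Set (ℕ → G)) (τ : TopologicalSpace G) : Prop :=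
  IsPTopFor S τ ∧ ∀ τ' : TopologicalSpace G, IsPTopFor S τ' → τ ≤ τ'

/-- `s_S(G_d^∧)`: the characters `χ` of the discrete group `G` with `χ(u_n) → 0` for all
`u ∈ S`. -/
def sS {G : Type*} [AddCommGroup G] (S : Set (ℕ → G)) : Set (G →+ 𝕋) :=
  {χ | ∀ u ∈ S, Filter.Tendsto (fun n => χ (u n)) Filter.atTop (nhds (0 : 𝕋))}

/-- `T_H`: the coarsest (initial) topology on `G` making every character of `H` continuous. -/
def TH {G : Type*} [AddCommGroup G] (H : Set (G →+ 𝕋)) : TopologicalSpace G :=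
  ⨅ χ ∈ H, TopologicalSpace.induced (χ : G → 𝕋) inferInstance

/-- `(G, τ)` is maximally almost periodic: continuous characters separate points. -/
def IsMAP {G : Type*} [AddCommGroup G] (τ : TopologicalSpace G) : Prop :=
  ∀ g : G, g ≠ 0 → ∃ χ : G →+ 𝕋, @Continuous G 𝕋 τ _ χ ∧ χ g ≠ 0

/-- The dual group of `(G, τ)`: the subgroup of the character group of `G_d` consisting of
`τ`-continuous characters. -/
def dual {G : Type*} [AddCommGroup G] (τ : TopologicalSpace G) : AddSubgroup (G →+ 𝕋) where
  carrier := {χ : G →+ 𝕋 | @Continuous G 𝕋 τ _ χ}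
  zero_mem' := by
    letI := τ
    show Continuous fun _ : G => (0 : 𝕋)
    exact continuous_const
  add_mem' := by
    intro a b ha hb
    letI := τ
    show Continuous fun g : G => a g + b g
    exact Continuous.add ha hb
  neg_mem' := by
    intro a ha
    letI := τ
    show Continuous fun g : G => -(a g)
    exact Continuous.neg ha

/-- The compact-open topology on the dual group of `(G, τ)`. -/
def coTop {G : Type*} [AddCommGroup G] (τ : TopologicalSpace G) :
    TopologicalSpace ↥(dual τ) :=
  TopologicalSpace.generateFrom
    {T | ∃ (K : Set G) (U : Set 𝕋), @IsCompact G τ K ∧ IsOpen U ∧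
          T = {χ : ↥(dual τ) | ∀ g ∈ K, (χ : G →+ 𝕋) g ∈ U}}

/-- Evaluation at `g ∈ G`, as a character of the dual group of `(G, τ)`; this is the value of the
canonical map `G → bG` at `g`. -/
def evalHom {G : Type*} [AddCommGroup G] (τ : TopologicalSpace G) (g : G) :
    ↥(dual τ) →+ 𝕋 where
  toFun χ := (χ : G →+ 𝕋) g
  map_zero' := rfl
  map_add' _ _ := rfl

/-- The natural (compact-open = pointwise) topology on the character group `A_d^∧` of a
discrete abelian group `A`. -/
def Xtop (A : Type*) [AddCommGroup A] : TopologicalSpace (A →+ 𝕋) :=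
  TopologicalSpace.induced (fun χ : A →+ 𝕋 => (χ : A → 𝕋)) Pi.topologicalSpace

/-- For a sequence `u` of characters of `X`, `su u = s_u(X) = {x | u_n(x) → 0}`. -/
def su {X : Type*} [AddCommGroup X] (u : ℕ → (X →+ 𝕋)) : Set X :=
  {x | Filter.Tendsto (fun n => u n x) Filter.atTop (nhds (0 : 𝕋))}

/-- The `g`-closure of a subset `H` of the abelian topological group `(X, τ)`: the intersection
of all `s_u(X)` over sequences `u` of continuous characters of `(X, τ)` with `H ⊆ s_u(X)`. -/
def gClosure {X : Type*} [AddCommGroup X] (τ : TopologicalSpace X) (H : Set X) : Set X :=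
  ⋂ u ∈ {u : ℕ → (X →+ 𝕋) | (∀ n, @Continuous X 𝕋 τ _ (u n)) ∧ H ⊆ su u}, su u

/-- `H` is a `g`-closed subset of `(X, τ)`. -/
def IsGClosed {X : Type*} [AddCommGroup X] (τ : TopologicalSpace X) (H : Set X) : Prop :=
  gClosure τ H = H

/-- The weight of a topology: the least cardinality of a topological basis. -/
def topWeight {X : Type*} (τ : TopologicalSpace X) : Cardinal :=
  ⨅ B ∈ {B : Set (Set X) | @TopologicalSpace.IsTopologicalBasis X τ B}, Cardinal.mk B

/-- The group uniformity of the group topology `τ` on `G`. -/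
def uniformOf {G : Type*} [AddCommGroup G] (τ : TopologicalSpace G)
    (h : @IsTopologicalAddGroup G τ _) : UniformSpace G :=
  letI := τ; letI := h; IsTopologicalAddGroup.rightUniformSpace G

end


section Aux

open TopologicalSpace

lemma my_sub_nhds {G : Type*} [AddCommGroup G] (τ : TopologicalSpace G)
    (h : @IsTopologicalAddGroup G τ _) {U : Set G} (hU : U ∈ @nhds G τ 0) :
    ∃ W ∈ @nhds G τ 0, ∀ a ∈ W, ∀ b ∈ W, a - b ∈ U := by
  letI := τ
  haveI := h
  have hc : ContinuousAt (fun p : G × G => p.1 - p.2) (0, 0) :=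
    (continuous_fst.sub continuous_snd).continuousAt
  have hpre : (fun p : G × G => p.1 - p.2) ⁻¹' U ∈ nhds ((0 : G), (0 : G)) :=
    hc.preimage_mem_nhds (by simpa using hU)
  rcases mem_nhds_prod_iff.1 hpre with ⟨V₁, hV₁, V₂, hV₂, hsub⟩
  exact ⟨V₁ ∩ V₂, Filter.inter_mem hV₁ hV₂,
    fun a ha b hb => hsub (Set.mk_mem_prod ha.1 hb.2)⟩

lemma my_precompact_induced {G : Type*} [AddCommGroup G] (χ : G →+ 𝕋) :
    IsPrecompactTop (TopologicalSpace.induced (χ : G → 𝕋) inferInstance) := by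
  classical
  intro U hU
  rw [nhds_induced] at hU
  rcases hU with ⟨V, hV, hVU⟩
  rw [map_zero] at hV
  obtain ⟨W, hW, hWsub⟩ := my_sub_nhds (inferInstance : TopologicalSpace 𝕋) inferInstance hV
  have hcov : (Set.univ : Set 𝕋) ⊆ ⋃ t : 𝕋, (fun x => t + x) '' interior W := by
    intro t _
    exact Set.mem_iUnion.2 ⟨t, ⟨0, mem_interior_iff_mem_nhds.2 hW, by simp⟩⟩
  obtain ⟨T, hT⟩ := isCompact_univ.elim_finite_subcover
    (fun t : 𝕋 => (fun x => t + x) '' interior W)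
    (fun t => (isOpenMap_add_left t) _ isOpen_interior) hcov
  refine ⟨T.image (fun t => if h : ∃ g' : G, χ g' ∈ (fun x => t + x) '' interior W
    then h.choose else 0), ?_⟩
  intro g
  have hg : χ g ∈ ⋃ t ∈ T, (fun x => t + x) '' interior W := hT (Set.mem_univ _)
  rcases Set.mem_iUnion₂.1 hg with ⟨t, htT, hgt⟩
  have hex : ∃ g' : G, χ g' ∈ (fun x => t + x) '' interior W := ⟨g, hgt⟩
  refine ⟨_, Finset.mem_image.2 ⟨t, htT, rfl⟩, ?_⟩
  rw [dif_pos hex]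
  apply hVU
  show χ (g - hex.choose) ∈ V
  rcases hgt with ⟨w, hw, hwg⟩
  rcases hex.choose_spec with ⟨w', hw', hwg'⟩
  have : χ (g - hex.choose) = w - w' := by
    rw [map_sub, ← hwg, ← hwg']; exact add_sub_add_left_eq_sub w w' t
  rw [this]
  exact hWsub w (interior_subset hw) w' (interior_subset hw')

lemma my_precompact_inf {G : Type*} [AddCommGroup G] (τ₁ τ₂ : TopologicalSpace G)
    (h₁ : @IsTopologicalAddGroup G τ₁ _) (h₂ : @IsTopologicalAddGroup G τ₂ _)
    (p₁ : IsPrecompactTop τ₁) (p₂ : IsPrecompactTop τ₂) : IsPrecompactTop (τ₁ ⊓ τ₂) := by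
  classical
  intro U hU
  rw [nhds_inf (t₁ := τ₁) (t₂ := τ₂)] at hU
  rcases Filter.mem_inf_iff.1 hU with ⟨U₁, hU₁, U₂, hU₂, rfl⟩
  obtain ⟨W₁, hW₁, hs₁⟩ := my_sub_nhds τ₁ h₁ hU₁
  obtain ⟨W₂, hW₂, hs₂⟩ := my_sub_nhds τ₂ h₂ hU₂
  obtain ⟨F₁, hF₁⟩ := p₁ W₁ hW₁
  obtain ⟨F₂, hF₂⟩ := p₂ W₂ hW₂
  refine ⟨(F₁ ×ˢ F₂).image (fun p => if h : ∃ g' : G, g' - p.1 ∈ W₁ ∧ g' - p.2 ∈ W₂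
    then h.choose else 0), ?_⟩
  intro g
  obtain ⟨f₁, hf₁, hg₁⟩ := hF₁ g
  obtain ⟨f₂, hf₂, hg₂⟩ := hF₂ g
  have hex : ∃ g' : G, g' - f₁ ∈ W₁ ∧ g' - f₂ ∈ W₂ := ⟨g, hg₁, hg₂⟩
  refine ⟨_, Finset.mem_image.2 ⟨(f₁, f₂), Finset.mem_product.2 ⟨hf₁, hf₂⟩, rfl⟩, ?_⟩
  rw [dif_pos hex]
  constructor
  · have := hs₁ _ hg₁ _ hex.choose_spec.1
    rwa [sub_sub_sub_cancel_right] at this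
  · have := hs₂ _ hg₂ _ hex.choose_spec.2
    rwa [sub_sub_sub_cancel_right] at this

lemma my_forward {G : Type*} [AddCommGroup G] (u : ℕ → G) (χ : G →+ 𝕋)
    (τ : TopologicalSpace G) (h : IsTopFor {u} τ) (hc : @Continuous G 𝕋 τ _ χ) :
    Filter.Tendsto (fun n => χ (u n)) Filter.atTop (nhds (0 : 𝕋)) := by
  letI := τ
  have h0 : TendsToZero τ u := h.2.2 u rfl
  have := (hc.tendsto 0).comp h0
  rw [map_zero] at this
  exact this

lemma my_key {G : Type*} [AddCommGroup G] (u : ℕ → G) (χ : G →+ 𝕋)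
    (τ : TopologicalSpace G) (h : IsTopFor {u} τ)
    (hten : Filter.Tendsto (fun n => χ (u n)) Filter.atTop (nhds (0 : 𝕋))) :
    IsTopFor {u} (τ ⊓ TopologicalSpace.induced (χ : G → 𝕋) inferInstance) := by
  set τi := TopologicalSpace.induced (χ : G → 𝕋) inferInstance with hτi
  refine ⟨topologicalAddGroup_inf h.1 (topologicalAddGroup_induced χ),
    t2Space_antitone inf_le_left h.2.1, ?_⟩
  intro v hv
  rw [Set.mem_singleton_iff] at hv
  subst hv
  unfold TendsToZero
  rw [nhds_inf (t₁ := τ) (t₂ := τi), Filter.tendsto_inf]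
  refine ⟨h.2.2 v rfl, ?_⟩
  rw [hτi, nhds_induced, Filter.tendsto_comap_iff]
  rw [map_zero]
  exact hten

end Aux

/-- Proposition 2.2(ii): Let `u` be a `TB`-sequence in an Abelian group `G`.
For a character `χ : G → 𝕋` the following are equivalent: `χ` is `τ_u`-continuous; `χ` is
`τ_{bu}`-continuous; `χ(u_n) → 0`, i.e. `χ ∈ s_u(G_d^∧)`. -/
theorem statement_13 {G : Type*} [AddCommGroup G] (u : ℕ → G) (hTB : IsTBSSet {u})
    (τu τbu : TopologicalSpace G) (hu : IsFinestFor {u} τu) (hbu : IsFinestPFor {u} τbu) :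
    ∀ χ : G →+ 𝕋,
      (@Continuous G 𝕋 τu _ χ ↔
        Filter.Tendsto (fun n => χ (u n)) Filter.atTop (nhds (0 : 𝕋))) ∧
      (@Continuous G 𝕋 τbu _ χ ↔
        Filter.Tendsto (fun n => χ (u n)) Filter.atTop (nhds (0 : 𝕋))) := by
  intro χ
  constructor
  · constructor
    · exact my_forward u χ τu hu.1
    · intro hten
      have h' := my_key u χ τu hu.1 hten
      have hle : τu ≤ TopologicalSpace.induced (χ : G → 𝕋) inferInstance :=
        le_trans (hu.2 _ h') inf_le_right
      exact continuous_iff_le_induced.2 hle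
  · constructor
    · exact my_forward u χ τbu hbu.1.1
    · intro hten
      have h' := my_key u χ τbu hbu.1.1 hten
      have hp : IsPTopFor {u} (τbu ⊓ TopologicalSpace.induced (χ : G → 𝕋) inferInstance) :=
        ⟨h', my_precompact_inf _ _ hbu.1.1.1 (topologicalAddGroup_induced χ) hbu.1.2
          (my_precompact_induced χ)⟩
      have hle : τbu ≤ TopologicalSpace.induced (χ : G → 𝕋) inferInstance :=
        le_trans (hbu.2 _ hp) inf_le_right
      exact continuous_iff_le_induced.2 hle
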